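/- Let γ : [a,b] → ℝ² be smooth, arc-length parameterized, with T = γ', curvature κ (T' = κ JT), and suppose ((1/2) ϱ κ² - Λ) T + (ϱ κ)' JT = a for a constant a ∈ ℝ² and smooth ϱ, Λ. Then there exists c ∈ ℝ with ϱ κ = -⟨J a, γ⟩ + c on [a,b], and moreover Λ = (1/2) ϱ κ² - ⟨a, T⟩. -/

import Mathlib

noncomputable def J2 (v : EuclideanSpace ℝ (Fin 2)) : EuclideanSpace ℝ (Fin 2) :=
  WithLp.toLp 2 ![-(v 1), v 0]

private lemma inner2 (x y : EuclideanSpace ℝ (Fin 2)) :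
    (inner ℝ x y : ℝ) = x 0 * y 0 + x 1 * y 1 := by
  simp [PiLp.inner_apply, Fin.sum_univ_two, RCLike.inner_apply, conj_trivial, mul_comm]

private lemma J2_zero (v : EuclideanSpace ℝ (Fin 2)) : J2 v 0 = -(v 1) := rfl
private lemma J2_one (v : EuclideanSpace ℝ (Fin 2)) : J2 v 1 = v 0 := rfl

theorem inflection_line_and_multiplier
    (a b : ℝ) (γ : ℝ → EuclideanSpace ℝ (Fin 2))
    (hγ : ContDiff ℝ (⊤ : ℕ∞) γ)
    (hunit : ∀ s : ℝ, ‖deriv γ s‖ = 1)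
    (T : ℝ → EuclideanSpace ℝ (Fin 2)) (hT : T = deriv γ)
    (κ : ℝ → ℝ) (hκ : ContDiff ℝ (⊤ : ℕ∞) κ)
    (hcurv : ∀ s : ℝ, deriv T s = κ s • J2 (T s))
    (ϱ Λ : ℝ → ℝ) (hϱ : ContDiff ℝ (⊤ : ℕ∞) ϱ) (hΛ : ContDiff ℝ (⊤ : ℕ∞) Λ)
    (A : EuclideanSpace ℝ (Fin 2))
    (heq : ∀ s ∈ Set.Icc a b,
      ((1 / 2) * ϱ s * (κ s) ^ 2 - Λ s) • T s
        + deriv (fun t => ϱ t * κ t) s • J2 (T s) = A) :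
    (∃ c : ℝ, ∀ s ∈ Set.Icc a b,
      ϱ s * κ s = -(inner ℝ (J2 A) (γ s) : ℝ) + c) ∧
    (∀ s ∈ Set.Icc a b,
      Λ s = (1 / 2) * ϱ s * (κ s) ^ 2 - (inner ℝ A (T s) : ℝ)) := by
  have hγd : Differentiable ℝ γ := hγ.differentiable (by simp)
  have hγ' : ∀ s, HasDerivAt γ (T s) s := fun s => hT ▸ (hγd s).hasDerivAt
  set q : ℝ → ℝ := deriv (fun t => ϱ t * κ t) with hq
  -- unit norm in components
  have hu : ∀ s, T s 0 * T s 0 + T s 1 * T s 1 = 1 := by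
    intro s
    have h1 : (inner ℝ (T s) (T s) : ℝ) = 1 := by
      rw [real_inner_self_eq_norm_sq, hT, hunit s, one_pow]
    rw [inner2] at h1; exact h1
  -- component equations
  have hc0 : ∀ s ∈ Set.Icc a b,
      ((1/2) * ϱ s * κ s ^ 2 - Λ s) * T s 0 - q s * T s 1 = A 0 := by
    intro s hs
    have h := congrArg (fun v : EuclideanSpace ℝ (Fin 2) => v 0) (heq s hs)
    simpa [J2_zero, mul_neg, sub_eq_add_neg] using h
  have hc1 : ∀ s ∈ Set.Icc a b,
      ((1/2) * ϱ s * κ s ^ 2 - Λ s) * T s 1 + q s * T s 0 = A 1 := by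
    intro s hs
    have h := congrArg (fun v : EuclideanSpace ℝ (Fin 2) => v 1) (heq s hs)
    simpa [J2_one] using h
  constructor
  · -- existence of c
    set f : ℝ → ℝ := fun t => ϱ t * κ t + (inner ℝ (J2 A) (γ t) : ℝ) with hf
    have hfd : ∀ s, HasDerivAt f (q s + (inner ℝ (J2 A) (T s) : ℝ)) s := by
      intro s
      have h1 : HasDerivAt (fun t => ϱ t * κ t) (q s) s :=
        ((hϱ.differentiable (by simp) s).mul (hκ.differentiable (by simp) s)).hasDerivAt
      have h2 : HasDerivAt (fun t => (inner ℝ (J2 A) (γ t) : ℝ))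
          ((inner ℝ (J2 A) (T s) : ℝ)) s := by
        have := (hasDerivAt_const s (J2 A)).inner ℝ (hγ' s)
        simpa using this
      exact h1.add h2
    have hzero : ∀ s ∈ Set.Icc a b, q s + (inner ℝ (J2 A) (T s) : ℝ) = 0 := by
      intro s hs
      have h0 := hc0 s hs
      have h1 := hc1 s hs
      have hus := hu s
      rw [inner2, J2_zero, J2_one]
      linear_combination (T s 0) * h1 - (T s 1) * h0 - q s * hus
    refine ⟨f a, fun s hs => ?_⟩
    have hconst : f s = f a := by
      refine constant_of_has_deriv_right_zero
        (fun t _ => ((hfd t).differentiableAt).continuousAt.continuousWithinAt)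
        (fun t ht => ?_) s hs
      have h := (hfd t).hasDerivWithinAt (s := Set.Ici t)
      rwa [hzero t (Set.mem_Icc_of_Ico ht)] at h
    have : ϱ s * κ s + (inner ℝ (J2 A) (γ s) : ℝ) = f a := hconst
    linarith
  · intro s hs
    have h0 := hc0 s hs
    have h1 := hc1 s hs
    have hus := hu s
    rw [inner2]
    linear_combination (-(T s 0)) * h0 - (T s 1) * h1 + (1/2 * ϱ s * κ s ^ 2 - Λ s) * hus
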